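/- arXiv:math/0612300 — 7 statements merged into one kernel-verified Lean document; each statement's English description precedes it below -/
import Mathlib

section
/- Let B be a nilpotent n×n matrix over an algebraically closed field with ker(B) ⊆ im(B) (all Jordan blocks of size ≥ 2), and let k be the number of Jordan blocks of B. Then for every i with 0 ≤ i ≤ k there exists a nilpotent matrix A with AB = BA = 0, A² = 0, and rank(A) = i; conversely every A with AB = BA = 0 satisfies A² = 0 and rank(A) ≤ k. -/
/-!
Since `AB = BA = 0` means `im B ⊆ ker A` and `im A ⊆ ker B`, the hypothesis `ker B ⊆ im B` gives
`im A ⊆ ker B ⊆ im B ⊆ ker A`, so `A² = 0` and `rank A ≤ dim ker B = k`. Conversely, any linear map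
that kills `im B` and takes values in `ker B` commutes to zero with `B`; as `im B` has codimension
`dim ker B = k`, such maps exist with every rank `i ≤ k`.
-/

open Module LinearMap

theorem LinearMap.exists_finrank_range_eq {K U W : Type*} [DivisionRing K]
    [AddCommGroup U] [Module K U] [AddCommGroup W] [Module K W]
    [FiniteDimensional K U] [FiniteDimensional K W] {i : ℕ}
    (hU : i ≤ finrank K U) (hW : i ≤ finrank K W) :
    ∃ f : U →ₗ[K] W, finrank K (range f) = i := by
  obtain ⟨j, hj⟩ := finrank_le_iff_exists_linearMap.mp
    (by rwa [finrank_fin_fun] : finrank K (Fin i → K) ≤ finrank K U)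
  obtain ⟨e, he⟩ := finrank_le_iff_exists_linearMap.mp
    (by rwa [finrank_fin_fun] : finrank K (Fin i → K) ≤ finrank K W)
  obtain ⟨s, hs⟩ := j.exists_leftInverse_of_injective (ker_eq_bot.mpr hj)
  have hs_surj : range s = ⊤ :=
    range_eq_top.mpr fun x => ⟨j x, LinearMap.congr_fun hs x⟩
  exact ⟨e ∘ₗ s, by rw [range_comp_of_range_eq_top e hs_surj, finrank_range_of_inj he,
    finrank_fin_fun]⟩

theorem Submodule.exists_le_ker_range_le_finrank_range_eq {K V W : Type*} [DivisionRing K]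
    [AddCommGroup V] [Module K V] [AddCommGroup W] [Module K W]
    [FiniteDimensional K V] [FiniteDimensional K W] (P : Submodule K V) (Q : Submodule K W)
    {i : ℕ} (hP : i ≤ finrank K (V ⧸ P)) (hQ : i ≤ finrank K Q) :
    ∃ g : V →ₗ[K] W, P ≤ ker g ∧ range g ≤ Q ∧ finrank K (range g) = i := by
  obtain ⟨f, hf⟩ := exists_finrank_range_eq hP hQ
  refine ⟨(Q.subtype ∘ₗ f) ∘ₗ P.mkQ, ?_, ?_, ?_⟩
  · simpa only [P.ker_mkQ] using ker_le_ker_comp P.mkQ (Q.subtype ∘ₗ f)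
  · rintro _ ⟨x, rfl⟩
    exact (f _).2
  · rw [range_comp_of_range_eq_top _ P.range_mkQ, range_comp,
      Submodule.finrank_map_subtype_eq, hf]

theorem LinearMap.finrank_quotient_range_eq_finrank_ker {K V : Type*} [DivisionRing K]
    [AddCommGroup V] [Module K V] [FiniteDimensional K V] (b : V →ₗ[K] V) :
    finrank K (V ⧸ range b) = finrank K (ker b) := by
  have := (range b).finrank_quotient_add_finrank
  have := b.finrank_range_add_finrank_ker
  omega

theorem Matrix.mul_eq_zero_iff_range_le_ker {K l m n : Type*} [CommRing K] [Fintype m]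
    [Fintype n] {A : Matrix l m K} {B : Matrix m n K} :
    A * B = 0 ↔ range B.mulVecLin ≤ ker A.mulVecLin := by
  classical
  rw [range_le_ker_iff, ← Matrix.mulVecLin_mul, ← Matrix.mulVecLin_zero, ← Matrix.toLin'_apply',
    ← Matrix.toLin'_apply', Matrix.toLin'.injective.eq_iff]

theorem stmt3_general {F : Type*} [Field F] {n : ℕ}
    (B : Matrix (Fin n) (Fin n) F)
    (hker : LinearMap.ker B.mulVecLin ≤ LinearMap.range B.mulVecLin)
    (k : ℕ) (hk : k = Module.finrank F (LinearMap.ker B.mulVecLin)) :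
    (∀ i : ℕ, i ≤ k → ∃ A : Matrix (Fin n) (Fin n) F,
        IsNilpotent A ∧ A * B = 0 ∧ B * A = 0 ∧ A ^ 2 = 0 ∧ A.rank = i) ∧
    (∀ A : Matrix (Fin n) (Fin n) F,
        IsNilpotent A → A * B = 0 → B * A = 0 → A ^ 2 = 0 ∧ A.rank ≤ k) := by
  have square_eq_zero {A : Matrix (Fin n) (Fin n) F} (hAB : A * B = 0) (hBA : B * A = 0) :
      A ^ 2 = 0 := by
    rw [Matrix.mul_eq_zero_iff_range_le_ker] at hAB hBA
    rw [sq, Matrix.mul_eq_zero_iff_range_le_ker]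
    exact hBA.trans (hker.trans hAB)
  refine ⟨fun i hi => ?_, fun A _ hAB hBA => ⟨square_eq_zero hAB hBA, ?_⟩⟩
  · obtain ⟨g, hBg, hgB, hrank⟩ := Submodule.exists_le_ker_range_le_finrank_range_eq
      (range B.mulVecLin) (ker B.mulVecLin)
      (by rwa [finrank_quotient_range_eq_finrank_ker, ← hk]) (hk ▸ hi)
    have hA : (LinearMap.toMatrix' g).mulVecLin = g := by
      rw [← Matrix.toLin'_apply', Matrix.toLin'_toMatrix']
    have hAB : LinearMap.toMatrix' g * B = 0 := by
      rwa [Matrix.mul_eq_zero_iff_range_le_ker, hA]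
    have hBA : B * LinearMap.toMatrix' g = 0 := by
      rwa [Matrix.mul_eq_zero_iff_range_le_ker, hA]
    have hsq := square_eq_zero hAB hBA
    exact ⟨LinearMap.toMatrix' g, ⟨2, hsq⟩, hAB, hBA, hsq, by rw [Matrix.rank, hA, hrank]⟩
  · rw [Matrix.rank, hk]
    exact Submodule.finrank_mono (Matrix.mul_eq_zero_iff_range_le_ker.mp hBA)

/-- Let `B` be a nilpotent matrix over an algebraically closed field with `ker B ⊆ im B`
(all Jordan blocks of size ≥ 2) and `k = dim ker B` the number of Jordan blocks of `B`.
Then for every `0 ≤ i ≤ k` there is a nilpotent `A` with `AB = BA = 0`, `A² = 0` and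
`rank A = i`; conversely every nilpotent `A` with `AB = BA = 0` satisfies `A² = 0` and
`rank A ≤ k`. -/
theorem stmt3 {F : Type*} [Field F] [IsAlgClosed F] {n : ℕ}
    (B : Matrix (Fin n) (Fin n) F) (hB : IsNilpotent B)
    (hker : LinearMap.ker B.mulVecLin ≤ LinearMap.range B.mulVecLin)
    (k : ℕ) (hk : k = Module.finrank F (LinearMap.ker B.mulVecLin)) :
    (∀ i : ℕ, i ≤ k → ∃ A : Matrix (Fin n) (Fin n) F,
        IsNilpotent A ∧ A * B = 0 ∧ B * A = 0 ∧ A ^ 2 = 0 ∧ A.rank = i) ∧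
    (∀ A : Matrix (Fin n) (Fin n) F,
        IsNilpotent A → A * B = 0 → B * A = 0 → A ^ 2 = 0 ∧ A.rank ≤ k) :=
  stmt3_general B hker k hk
end

section
/- Let B = J_{(μ₁,...,μ_t)} be a nilpotent Jordan matrix with all block sizes μ_i ≥ 2, and let A satisfy AB = BA = 0. Writing A = [A_{ij}] in block form according to the partition (μ₁,...,μ_t), each block A_{ij} has at most one nonzero entry, located in position (1, μ_j) (top-right corner) of the block. -/
/-- The `n × n` upper-triangular nilpotent Jordan block (ones on the superdiagonal). -/
def jordanBlock (F : Type*) [Zero F] [One F] (n : ℕ) : Matrix (Fin n) (Fin n) F :=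
  Matrix.of fun i j => if (i : ℕ) + 1 = (j : ℕ) then 1 else 0

/-
Multiplying by a nilpotent Jordan block on the left shifts rows up, on the right shifts columns
to the right. So row `r - 1` of block `i` of `B * A` is row `r` of `A`, and column `s + 1` of
block `j` of `A * B` is column `s` of `A`. Hence `BA = 0` kills every row of `A` that is not the
first of its block, and `AB = 0` every column that is not the last of its block.
-/

open Matrix

section JordanShift

variable {R : Type*} [NonAssocSemiring R]

theorem jordanBlock_mulVec_apply {n : ℕ} (v : Fin n → R) (a : ℕ) (ha : a + 1 < n) :
    (jordanBlock R n *ᵥ v) ⟨a, by omega⟩ = v ⟨a + 1, ha⟩ := by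
  rw [mulVec, dotProduct, Finset.sum_eq_single ⟨a + 1, ha⟩]
  · simp [jordanBlock]
  · intro b _ hb
    have : a + 1 ≠ (b : ℕ) := fun h => hb (Fin.ext h.symm)
    simp [jordanBlock, this]
  · simp

theorem vecMul_jordanBlock_apply {n : ℕ} (v : Fin n → R) (b : ℕ) (hb : b + 1 < n) :
    (v ᵥ* jordanBlock R n) ⟨b + 1, hb⟩ = v ⟨b, by omega⟩ := by
  rw [vecMul, dotProduct, Finset.sum_eq_single ⟨b, by omega⟩]
  · simp [jordanBlock]
  · intro a _ ha
    have : (a : ℕ) ≠ b := fun h => ha (Fin.ext h)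
    simp [jordanBlock, this]
  · simp

end JordanShift

section BlockDiagonal

variable {ι R : Type*} [Fintype ι] [DecidableEq ι] [NonAssocSemiring R]
  {m' : ι → Type*} [∀ i, Fintype (m' i)]

theorem Matrix.blockDiagonal'_mul_apply {n : Type*} (J : ∀ i, Matrix (m' i) (m' i) R)
    (A : Matrix ((i : ι) × m' i) n R) (i : ι) (a : m' i) (x : n) :
    (blockDiagonal' J * A) ⟨i, a⟩ x = (J i *ᵥ fun b => A ⟨i, b⟩ x) a := by
  rw [mul_apply, Fintype.sum_sigma, Finset.sum_eq_single i]
  · simp [mulVec, dotProduct]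
  · intro k _ hk
    exact Finset.sum_eq_zero fun b _ => by rw [blockDiagonal'_apply_ne _ _ _ hk.symm, zero_mul]
  · simp

theorem Matrix.mul_blockDiagonal'_apply {m : Type*} (J : ∀ i, Matrix (m' i) (m' i) R)
    (A : Matrix m ((i : ι) × m' i) R) (x : m) (j : ι) (b : m' j) :
    (A * blockDiagonal' J) x ⟨j, b⟩ = ((fun a => A x ⟨j, a⟩) ᵥ* J j) b := by
  rw [mul_apply, Fintype.sum_sigma, Finset.sum_eq_single j]
  · simp [vecMul, dotProduct]
  · intro k _ hk
    exact Finset.sum_eq_zero fun a _ => by rw [blockDiagonal'_apply_ne _ _ _ hk, mul_zero]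
  · simp

end BlockDiagonal

section JordanAnnihilator

variable {ι R : Type*} [Fintype ι] [DecidableEq ι] [NonAssocSemiring R] (μ : ι → ℕ)

theorem apply_eq_zero_of_blockDiagonal'_jordanBlock_mul_eq_zero {n : Type*}
    {A : Matrix ((i : ι) × Fin (μ i)) n R}
    (hBA : blockDiagonal' (fun i => jordanBlock R (μ i)) * A = 0)
    {i : ι} {r : Fin (μ i)} (hr : (r : ℕ) ≠ 0) (x : n) : A ⟨i, r⟩ x = 0 := by
  obtain ⟨r, hr'⟩ := r
  obtain ⟨a, rfl⟩ : ∃ a, r = a + 1 := Nat.exists_eq_succ_of_ne_zero hr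
  have := congr_fun₂ hBA ⟨i, ⟨a, by omega⟩⟩ x
  rwa [blockDiagonal'_mul_apply, jordanBlock_mulVec_apply _ a hr'] at this

theorem apply_eq_zero_of_mul_blockDiagonal'_jordanBlock_eq_zero {m : Type*}
    {A : Matrix m ((i : ι) × Fin (μ i)) R}
    (hAB : A * blockDiagonal' (fun i => jordanBlock R (μ i)) = 0)
    {j : ι} {s : Fin (μ j)} (hs : (s : ℕ) ≠ μ j - 1) (x : m) : A x ⟨j, s⟩ = 0 := by
  have hs' : (s : ℕ) + 1 < μ j := by omega
  have := congr_fun₂ hAB x ⟨j, ⟨s + 1, hs'⟩⟩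
  rwa [mul_blockDiagonal'_apply, vecMul_jordanBlock_apply _ s hs'] at this

end JordanAnnihilator

theorem stmt7_general {F : Type*} [Field F] {t : ℕ} (μ : Fin t → ℕ)
    (A : Matrix ((i : Fin t) × Fin (μ i)) ((i : Fin t) × Fin (μ i)) F)
    (hAB : A * Matrix.blockDiagonal' (fun i => jordanBlock F (μ i)) = 0)
    (hBA : Matrix.blockDiagonal' (fun i => jordanBlock F (μ i)) * A = 0) :
    ∀ (i j : Fin t) (r : Fin (μ i)) (s : Fin (μ j)),
      A ⟨i, r⟩ ⟨j, s⟩ ≠ 0 → (r : ℕ) = 0 ∧ (s : ℕ) = μ j - 1 := by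
  intro i j r s hA
  exact ⟨by_contra fun hr => hA (apply_eq_zero_of_blockDiagonal'_jordanBlock_mul_eq_zero μ hBA hr _),
    by_contra fun hs => hA (apply_eq_zero_of_mul_blockDiagonal'_jordanBlock_eq_zero μ hAB hs _)⟩

/-- Let `B = J_{(μ₁,…,μ_t)}` be a direct sum of nilpotent Jordan blocks with all
sizes `μ_i ≥ 2` (sizes weakly decreasing), and let `A` satisfy `AB = BA = 0`.  Then
in the block decomposition of `A` according to `(μ₁,…,μ_t)`, every block `A_{ij}` has
at most one nonzero entry, located in the top-right corner, i.e. in position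
`(1, μ_j)` of the block. -/
theorem stmt7 {F : Type*} [Field F] {t : ℕ} (μ : Fin t → ℕ)
    (hμ2 : ∀ i, 2 ≤ μ i) (hμmono : Antitone μ)
    (A : Matrix ((i : Fin t) × Fin (μ i)) ((i : Fin t) × Fin (μ i)) F)
    (hAB : A * Matrix.blockDiagonal' (fun i => jordanBlock F (μ i)) = 0)
    (hBA : Matrix.blockDiagonal' (fun i => jordanBlock F (μ i)) * A = 0) :
    ∀ (i j : Fin t) (r : Fin (μ i)) (s : Fin (μ j)),
      A ⟨i, r⟩ ⟨j, s⟩ ≠ 0 → (r : ℕ) = 0 ∧ (s : ℕ) = μ j - 1 :=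
  stmt7_general μ A hAB hBA
end

section
/- Let B be a nilpotent n×n matrix over an algebraically closed field and A nilpotent with AB = BA = 0. If B has exactly k Jordan blocks of size ≥ 2 and m blocks of size 1, then A^{m+3} = 0; in fact the largest Jordan block of A has size at most m + 2. -/
open Matrix LinearMap Submodule Module

set_option synthInstance.maxHeartbeats 400000
set_option maxHeartbeats 1000000

section Aux

variable {F : Type*} [Field F] {n : ℕ}

lemma aux_mvl_zero {A : Matrix (Fin n) (Fin n) F} (h : A.mulVecLin = 0) : A = 0 := by
  apply Matrix.toLin'.injective
  rw [Matrix.toLin'_apply', h, Matrix.toLin'_apply', Matrix.mulVecLin_zero]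

/-- Rank-nullity for the restriction of an endomorphism to a submodule. -/
lemma aux_rn (f : (Fin n → F) →ₗ[F] (Fin n → F)) (p : Submodule F (Fin n → F)) :
    finrank F ↥(p.map f) + finrank F ↥(LinearMap.ker f ⊓ p) = finrank F ↥p := by
  have h1 := LinearMap.finrank_range_add_finrank_ker (f.domRestrict p)
  rw [LinearMap.range_domRestrict] at h1
  have h2 : finrank F ↥(LinearMap.ker (f.domRestrict p))
      = finrank F ↥(LinearMap.ker f ⊓ p) := by
    rw [LinearMap.ker_domRestrict]
    have h3 : (LinearMap.ker f).comap p.subtype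
        = (LinearMap.ker f ⊓ p).comap p.subtype := by
      rw [Submodule.comap_inf, Submodule.comap_subtype_self, inf_top_eq]
    rw [h3]
    exact (Submodule.comapSubtypeEquivOfLe inf_le_right).finrank_eq
  rw [h2] at h1
  exact h1

lemma aux_strict (A : Matrix (Fin n) (Fin n) F) (hA : IsNilpotent A) (i : ℕ)
    (h : A ^ (i + 1) ≠ 0) : (A ^ (i + 1)).rank < (A ^ i).rank := by
  by_contra hlt
  push_neg at hlt
  have hle : (A ^ (i + 1)).rank ≤ (A ^ i).rank := by
    rw [pow_succ]; exact Matrix.rank_mul_le_left _ _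
  have heq : (A ^ (i + 1)).rank = (A ^ i).rank := le_antisymm hle hlt
  have hrle : LinearMap.range (A ^ (i + 1)).mulVecLin
      ≤ LinearMap.range (A ^ i).mulVecLin := by
    rw [pow_succ, Matrix.mulVecLin_mul]
    exact LinearMap.range_comp_le_range _ _
  have hreq : LinearMap.range (A ^ (i + 1)).mulVecLin
      = LinearMap.range (A ^ i).mulVecLin :=
    Submodule.eq_of_le_of_finrank_le hrle (le_of_eq heq.symm)
  have hall : ∀ j, LinearMap.range (A ^ (i + j)).mulVecLin
      = LinearMap.range (A ^ i).mulVecLin := by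
    intro j
    induction j with
    | zero => rfl
    | succ j ih =>
      have hp : A ^ (i + (j + 1)) = A * A ^ (i + j) := by
        rw [← pow_succ']; ring_nf
      rw [hp, Matrix.mulVecLin_mul, LinearMap.range_comp, ih,
        ← LinearMap.range_comp, ← Matrix.mulVecLin_mul, ← pow_succ']
      exact hreq
  obtain ⟨N, hN⟩ := hA
  have h0 : A ^ (i + N) = 0 := by rw [pow_add, hN, mul_zero]
  have hbot := hall N
  rw [h0, Matrix.mulVecLin_zero, LinearMap.range_zero] at hbot
  have hAi : A ^ i = 0 :=
    aux_mvl_zero (LinearMap.range_eq_bot.mp hbot.symm)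
  exact h (by rw [pow_succ, hAi, zero_mul])

lemma aux_chain (A : Matrix (Fin n) (Fin n) F) (hA : IsNilpotent A) (i : ℕ) :
    ∀ j, A ^ (i + j) = 0 ∨ (A ^ (i + j)).rank + j ≤ (A ^ i).rank := by
  intro j
  induction j with
  | zero => right; simp
  | succ j ih =>
    by_cases h0 : A ^ (i + (j + 1)) = 0
    · exact Or.inl h0
    · right
      have h0' : A ^ (i + j + 1) ≠ 0 := by rw [add_assoc]; exact h0
      have hj : A ^ (i + j) ≠ 0 := by
        intro hc
        exact h0' (by rw [pow_succ, hc, zero_mul])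
      rcases ih with h | h
      · exact absurd h hj
      · have hs : (A ^ (i + j + 1)).rank < (A ^ (i + j)).rank :=
          aux_strict A hA (i + j) h0'
        have : (A ^ (i + (j + 1))).rank = (A ^ (i + j + 1)).rank := by
          rw [add_assoc]
        omega

end Aux

/-- A nilpotent matrix `A` has Jordan type `ν` (a partition of `n`, as a multiset of
positive block sizes) iff for every `i` the number of parts of `ν` of size at least
`i + 1` equals `rank(A^i) - rank(A^(i+1))`. -/
def HasJordanType {F : Type*} [Field F] {n : ℕ} (A : Matrix (Fin n) (Fin n) F)
    (ν : Multiset ℕ) : Prop :=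
  ν.sum = n ∧ (∀ x ∈ ν, 0 < x) ∧
    ∀ i : ℕ, (ν.filter (fun x => i + 1 ≤ x)).card + (A ^ (i + 1)).rank = (A ^ i).rank

/-- If `A`, `B` are nilpotent with `AB = BA = 0` and `B` has exactly `m` Jordan blocks
of size 1, then the largest Jordan block of `A` has size at most `m + 2`; in
particular `A^(m+2) = 0` and `A^(m+3) = 0`. -/
theorem stmt8 {F : Type*} [Field F] [IsAlgClosed F] {n : ℕ}
    (A B : Matrix (Fin n) (Fin n) F)
    (hA : IsNilpotent A) (hB : IsNilpotent B)
    (hAB : A * B = 0) (hBA : B * A = 0)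
    (μ : Multiset ℕ) (hμ : HasJordanType B μ)
    (m : ℕ) (hm : (μ.filter (fun x => x = 1)).card = m) :
    A ^ (m + 2) = 0 ∧ A ^ (m + 3) = 0 := by
  obtain ⟨hsum, hpos, hrk⟩ := hμ
  set f := A.mulVecLin with hf
  set g := B.mulVecLin with hg
  -- basic identities from the Jordan type
  have h0 := hrk 0
  rw [pow_one, pow_zero, Matrix.rank_one] at h0
  have hfilt0 : μ.filter (fun x => 0 + 1 ≤ x) = μ :=
    Multiset.filter_eq_self.mpr (fun x hx => hpos x hx)
  rw [hfilt0, Fintype.card_fin] at h0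
  have h1 := hrk 1
  rw [pow_one, show (1:ℕ) + 1 = 2 from rfl] at h1
  -- card μ = m + k
  have hcard : μ.card = m + (μ.filter (fun x => 2 ≤ x)).card := by
    have hsplit := Multiset.filter_add_not (fun x => x = 1) μ
    have hcc := congrArg Multiset.card hsplit
    rw [Multiset.card_add] at hcc
    have hco : Multiset.filter (fun a => ¬ a = 1) μ
        = Multiset.filter (fun x => 2 ≤ x) μ := by
      apply Multiset.filter_congr
      intro x hx
      have := hpos x hx
      constructor <;> intro h <;> omega
    rw [hco, hm] at hcc
    omega
  -- algebraic relations between f and g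
  have hfg : f ∘ₗ g = 0 := by
    rw [hf, hg, ← Matrix.mulVecLin_mul, hAB, Matrix.mulVecLin_zero]
  have hgf : g ∘ₗ f = 0 := by
    rw [hf, hg, ← Matrix.mulVecLin_mul, hBA, Matrix.mulVecLin_zero]
  have hrgkf : LinearMap.range g ≤ LinearMap.ker f :=
    LinearMap.range_le_ker_iff.mpr hfg
  have hrfkg : LinearMap.range f ≤ LinearMap.ker g :=
    LinearMap.range_le_ker_iff.mpr hgf
  -- dimension of ker g
  have hrkB : finrank F ↥(LinearMap.range g) = B.rank := rfl
  have hkerg : B.rank + finrank F ↥(LinearMap.ker g) = n := by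
    have hrn := LinearMap.finrank_range_add_finrank_ker g
    rwa [Module.finrank_pi, Fintype.card_fin, hrkB] at hrn
  -- finrank (ker g ⊓ range g) = k
  have hrng := aux_rn g (LinearMap.range g)
  have hmapg : (LinearMap.range g).map g = LinearMap.range (B ^ 2).mulVecLin := by
    rw [pow_two, Matrix.mulVecLin_mul, LinearMap.range_comp]
  rw [hmapg] at hrng
  have hrkB2 : finrank F ↥(LinearMap.range (B ^ 2).mulVecLin) = (B ^ 2).rank := rfl
  rw [hrkB2, hrkB] at hrng
  -- rank A² ≤ m
  have hA2 : (A ^ 2).rank ≤ m := by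
    have hrn := aux_rn f (LinearMap.ker g)
    have hle2 : LinearMap.range (A ^ 2).mulVecLin ≤ (LinearMap.ker g).map f := by
      rw [pow_two, Matrix.mulVecLin_mul, LinearMap.range_comp]
      exact Submodule.map_mono hrfkg
    have h2 : (A ^ 2).rank ≤ finrank F ↥((LinearMap.ker g).map f) :=
      Submodule.finrank_mono hle2
    have h3 : LinearMap.ker g ⊓ LinearMap.range g
        ≤ LinearMap.ker f ⊓ LinearMap.ker g :=
      le_inf (le_trans inf_le_right hrgkf) inf_le_left
    have h4 : finrank F ↥(LinearMap.ker g ⊓ LinearMap.range g)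
        ≤ finrank F ↥(LinearMap.ker f ⊓ LinearMap.ker g) :=
      Submodule.finrank_mono h3
    omega
  -- conclude with the chain lemma
  have hchain := aux_chain A hA 2 m
  have hAm2 : A ^ (m + 2) = 0 := by
    rw [add_comm]
    rcases hchain with h | h
    · exact h
    · have hz : (A ^ (2 + m)).rank = 0 := by omega
      have hbot : LinearMap.range (A ^ (2 + m)).mulVecLin = ⊥ :=
        Submodule.finrank_eq_zero.mp hz
      exact aux_mvl_zero (LinearMap.range_eq_bot.mp hbot)
  exact ⟨hAm2, by rw [show m + 3 = (m + 2) + 1 from rfl, pow_succ, hAm2, zero_mul]⟩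
end

section
/- Let B have Jordan type (μ₁,...,μ_k,1^m) with μ_k ≥ 2, and let A be nilpotent with AB = BA = 0. Then the Jordan type of A has the form obtained by sorting (λ₁+ε₁, ..., λ_l+ε_l, 2^c, 1^d) in decreasing order, where (λ₁,...,λ_l) is a partition of m, each ε_i ∈ {0,1,2}, 0 ≤ 2c ≤ 2k − Σε_i, and 2c + d + Σ(λ_i+ε_i) = n. -/
private lemma tele_sum (f : ℕ → ℕ) (hf : ∀ i, f (i+1) ≤ f i) (l : ℕ) :
    ∑ i ∈ Finset.range l, (f i - f (i+1)) = f 0 - f l := by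
  induction l with
  | zero => simp
  | succ l ih =>
    have hm : f l ≤ f 0 := antitone_nat_of_succ_le hf (Nat.zero_le l)
    rw [Finset.sum_range_succ, ih]
    have := hf l
    omega

private lemma sum_ite_lt (l x : ℕ) :
    (∑ i ∈ Finset.range l, if i < x then 1 else 0) = min x l := by
  induction l with
  | zero => simp
  | succ l ih =>
    rw [Finset.sum_range_succ, ih]
    split_ifs <;> omega

private def capf (b sc : ℕ) (i : ℕ) : ℕ :=
  if i < b then 2*(b-i) + (sc - b) else if i < sc then sc - i else 0

private lemma capf_mono (b sc i : ℕ) (h : b ≤ sc) :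
    capf b sc (i+1) ≤ capf b sc i ∧ capf b sc i ≤ capf b sc (i+1) + 2 := by
  unfold capf; split_ifs <;> omega

private lemma capf_diff (b sc i : ℕ) (h : b ≤ sc) :
    capf b sc i - capf b sc (i+1) = if i < b then 2 else if i < sc then 1 else 0 := by
  unfold capf; split_ifs <;> omega

private lemma capf_zero (b sc i : ℕ) (hb : b ≤ sc) (h : sc ≤ i) : capf b sc i = 0 := by
  unfold capf; split_ifs <;> omega

private lemma capf_zeroth (b sc : ℕ) (h : b ≤ sc) : capf b sc 0 = sc + b := by
  unfold capf; split_ifs <;> omega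

private def epsf (e b sc i : ℕ) : ℕ :=
  min e (capf b sc i) - min e (capf b sc (i+1))

private lemma epsf_le (e b sc i : ℕ) (h : b ≤ sc) :
    epsf e b sc i ≤ capf b sc i - capf b sc (i+1) := by
  have := (capf_mono b sc i h).1; unfold epsf; omega

private lemma epsf_sum (e b sc l : ℕ) (hb : b ≤ sc) (hsc : sc ≤ l) (he : e ≤ sc + b) :
    ∑ i ∈ Finset.range l, epsf e b sc i = e := by
  have hmono : ∀ i, min e (capf b sc (i+1)) ≤ min e (capf b sc i) := fun i => by
    have := (capf_mono b sc i hb).1; omega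
  have ht := tele_sum (fun i => min e (capf b sc i)) hmono l
  unfold epsf
  rw [ht, capf_zero b sc l hb hsc, capf_zeroth b sc hb]
  omega

private lemma epsf_sat (e b sc i : ℕ) (hb : b ≤ sc) (h : 0 < epsf e b sc i) :
    epsf e b sc (i+1) = capf b sc (i+1) - capf b sc (i+2) := by
  have h1 := (capf_mono b sc i hb).1
  have h2 := (capf_mono b sc (i+1) hb).1
  rw [show i + 2 = i + 1 + 1 by omega]
  unfold epsf at *
  omega

private lemma filter_replicate_card (c x : ℕ) (p : ℕ → Prop) [DecidablePred p] :
    ((Multiset.replicate c x).filter p).card = if p x then c else 0 := by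
  induction c with
  | zero => simp
  | succ c ih =>
    rw [Multiset.replicate_succ, Multiset.filter_cons]
    split_ifs with h <;> simp_all

set_option maxHeartbeats 1000000 in
private lemma comb (r : ℕ → ℕ) (T n k m : ℕ)
    (h0 : r 0 = n) (hT : r T = 0)
    (hmono : ∀ j, r (j+1) ≤ r j)
    (hconv : ∀ j, r (j+1) + r (j+1) ≤ r j + r (j+2))
    (hr2 : r 2 ≤ m)
    (hin : 2 * r 1 ≤ 2*k + m + r 2)
    (hkm : 2*k + m ≤ n) :
    ∃ (l : ℕ) (lam eps : Fin l → ℕ) (c d : ℕ),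
      (∀ i, 0 < lam i) ∧ (∀ i j, i ≤ j → lam j ≤ lam i) ∧ (∑ i, lam i = m) ∧
      (∀ i, eps i ≤ 2) ∧ (∑ i, eps i) + 2 * c ≤ 2 * k ∧
      2 * c + d + (∑ i, (lam i + eps i)) = n ∧
      (((Finset.univ.val.map fun i => lam i + eps i) +
          Multiset.replicate c 2 + Multiset.replicate d 1).sum = n ∧
       (∀ x ∈ ((Finset.univ.val.map fun i => lam i + eps i) +
          Multiset.replicate c 2 + Multiset.replicate d 1), 0 < x) ∧
       ∀ i : ℕ, (((Finset.univ.val.map fun i => lam i + eps i) +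
          Multiset.replicate c 2 + Multiset.replicate d 1).filter
            (fun x => i + 1 ≤ x)).card + r (i+1) = r i) := by
  classical
  set Δ : ℕ → ℕ := fun j => r j - r (j+1) with hΔ
  have hΔsucc : ∀ j, Δ (j+1) ≤ Δ j := by
    intro j
    have := hconv j; have := hmono j; have := hmono (j+1)
    simp only [hΔ]
    rw [show j+1+1 = j+2 from by omega]
    omega
  have hΔanti : Antitone Δ := antitone_nat_of_succ_le hΔsucc
  have hranti : Antitone r := antitone_nat_of_succ_le hmono
  have hΔT : ∀ j, T ≤ j → Δ j = 0 := by
    intro j hj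
    have h1 : r j ≤ r T := hranti hj
    have h2 := hmono j
    simp only [hΔ]; omega
  set q : ℕ → ℕ := fun i => ((Finset.range T).filter (fun j => i < Δ j)).card with hq
  have key : ∀ i j, j + 1 ≤ q i ↔ i < Δ j := by
    intro i j
    constructor
    · intro h
      by_contra hc
      push_neg at hc
      have hsub : (Finset.range T).filter (fun j' => i < Δ j') ⊆ Finset.range j := by
        intro x hx
        simp only [Finset.mem_filter, Finset.mem_range] at hx ⊢
        by_contra hxj
        push_neg at hxj
        have := hΔanti hxj
        omega
      have := Finset.card_le_card hsub
      rw [Finset.card_range] at this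
      simp only [hq] at h
      omega
    · intro h
      have hjT : j < T := by
        by_contra hjT
        push_neg at hjT
        rw [hΔT j hjT] at h; omega
      have hsub : Finset.range (j+1) ⊆ (Finset.range T).filter (fun j' => i < Δ j') := by
        intro x hx
        simp only [Finset.mem_range] at hx
        simp only [Finset.mem_filter, Finset.mem_range]
        exact ⟨by omega, lt_of_lt_of_le h (hΔanti (by omega))⟩
      have := Finset.card_le_card hsub
      rw [Finset.card_range] at this
      simp only [hq]
      omega
  have hqanti : ∀ i, q (i+1) ≤ q i := by
    intro i
    apply Finset.card_le_card
    intro x hx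
    simp only [Finset.mem_filter] at hx ⊢
    exact ⟨hx.1, by omega⟩
  have hsum_q : ∑ i ∈ Finset.range (Δ 0), q i = n := by
    have hswap : ∑ i ∈ Finset.range (Δ 0), q i = ∑ j ∈ Finset.range T, min (Δ j) (Δ 0) := by
      simp only [hq, Finset.card_filter]
      rw [Finset.sum_comm]
      exact Finset.sum_congr rfl fun j _ => sum_ite_lt (Δ 0) (Δ j)
    rw [hswap]
    rw [Finset.sum_congr rfl fun j (_ : j ∈ Finset.range T) =>
      min_eq_left (hΔanti (Nat.zero_le j))]
    have ht := tele_sum r hmono T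
    simp only [hΔ]
    rw [ht, hT, h0]
    omega
  -- numerical definitions
  have hΔval : ∀ j, Δ j + r (j+1) = r j := by
    intro j; have := hmono j; simp only [hΔ]; omega
  have e0 : Δ 0 + r 1 = r 0 := hΔval 0
  have e1 : Δ 1 + r 2 = r 1 := hΔval 1
  have e2 : Δ 2 + r 3 = r 2 := hΔval 2
  have hbs : Δ 2 ≤ Δ 1 := hΔsucc 1
  have hsN : Δ 1 ≤ Δ 0 := hΔsucc 0
  obtain ⟨R, hR⟩ : ∃ x, x = min (n - m) (min (2*k) (2*(Δ 1))) := ⟨_, rfl⟩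
  obtain ⟨d, hd⟩ : ∃ x, x = (n - m) - R := ⟨_, rfl⟩
  obtain ⟨c, hc⟩ : ∃ x, x = R - min R (Δ 2 + Δ 1) := ⟨_, rfl⟩
  obtain ⟨e, he⟩ : ∃ x, x = R - 2*c := ⟨_, rfl⟩
  obtain ⟨l, hl⟩ : ∃ x, x = Δ 0 - c - d := ⟨_, rfl⟩
  obtain ⟨sc, hsc⟩ : ∃ x, x = Δ 1 - c := ⟨_, rfl⟩
  have f1 : c + Δ 2 ≤ Δ 1 := by omega
  have f2 : e + 2*c = R := by omega
  have f4 : d + Δ 1 ≤ Δ 0 := by omega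
  have f5 : sc ≤ l := by omega
  have f6 : e + 2*c + d + m = n := by omega
  have f7 : R ≤ 2*k := by omega
  have hb_le_sc : Δ 2 ≤ sc := by omega
  have he_le : e ≤ sc + Δ 2 := by omega
  -- part sizes and epsilons
  set Lfun : ℕ → ℕ := fun i => if i < sc then q i else 1 with hLfun
  set eps' : ℕ → ℕ := fun i => epsf e (Δ 2) sc i with heps'
  set lam' : ℕ → ℕ := fun i => Lfun i - eps' i with hlam'
  have hepscap : ∀ i, eps' i ≤ if i < Δ 2 then 2 else if i < sc then 1 else 0 := by
    intro i
    have h1 := epsf_le e (Δ 2) sc i hb_le_sc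
    have h2 := capf_diff (Δ 2) sc i hb_le_sc
    simp only [heps']
    omega
  have heps2 : ∀ i, eps' i ≤ 2 := by
    intro i
    have h1 := hepscap i
    split_ifs at h1 <;> omega
  have hq_ge3 : ∀ i, i < Δ 2 → 3 ≤ q i := fun i hi => (key i 2).2 hi
  have hq_eq2 : ∀ i, Δ 2 ≤ i → i < Δ 1 → q i = 2 := by
    intro i h1 h2
    have := (key i 1).2 h2
    have := key i 2
    omega
  have hq_eq1 : ∀ i, Δ 1 ≤ i → i < Δ 0 → q i = 1 := by
    intro i h1 h2
    have := (key i 0).2 h2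
    have := key i 1
    omega
  have hq_ge1 : ∀ i, i < Δ 0 → 1 ≤ q i := fun i hi => (key i 0).2 hi
  have hepsLf : ∀ i, eps' i + 1 ≤ Lfun i := by
    intro i
    have hcap := hepscap i
    rcases Nat.lt_or_ge i (Δ 2) with h1 | h1
    · rw [if_pos h1] at hcap
      have h3 := hq_ge3 i h1
      simp only [hLfun]
      rw [if_pos (by omega)]
      omega
    · rw [if_neg (by omega)] at hcap
      rcases Nat.lt_or_ge i sc with h2 | h2
      · rw [if_pos h2] at hcap
        have hq2 : q i = 2 := hq_eq2 i h1 (by omega)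
        simp only [hLfun]
        rw [if_pos h2]
        omega
      · rw [if_neg (by omega)] at hcap
        simp only [hLfun]
        rw [if_neg (by omega)]
        omega
  have hlam1 : ∀ i, 1 ≤ lam' i := by
    intro i
    have := hepsLf i
    simp only [hlam']
    omega
  have hsum_le : ∀ i, lam' i + eps' i = Lfun i := by
    intro i
    have := hepsLf i
    simp only [hlam']
    omega
  have hLmono : ∀ i, Lfun (i+1) ≤ Lfun i := by
    intro i
    have hge1 : i < sc → 1 ≤ q i := fun h => hq_ge1 i (by omega)
    simp only [hLfun]
    split_ifs with h1 h2 h2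
    · exact hqanti i
    · omega
    · exact hge1 h2
    · omega
  have hlam_adj : ∀ i, lam' (i+1) ≤ lam' i := by
    intro i
    by_cases h : eps' i = 0
    · have h1 := hLmono i
      have h2 := hepsLf (i+1)
      simp only [hlam']
      omega
    · have hs : eps' (i+1) = capf (Δ 2) sc (i+1) - capf (Δ 2) sc (i+2) := by
        simp only [heps'] at h ⊢
        exact epsf_sat e (Δ 2) sc i hb_le_sc (by omega)
      have hdiff := capf_diff (Δ 2) sc (i+1) hb_le_sc
      rw [show i + 1 + 1 = i + 2 from by omega] at hdiff
      rw [hdiff] at hs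
      rcases Nat.lt_or_ge (i+1) (Δ 2) with h2 | h2
      · rw [if_pos h2] at hs
        have hq3 := hq_ge3 (i+1) h2
        have hqa := hqanti i
        have heps := heps2 i
        have hLi : Lfun i = q i := by simp only [hLfun]; rw [if_pos (by omega)]
        have hLi1 : Lfun (i+1) = q (i+1) := by simp only [hLfun]; rw [if_pos (by omega)]
        simp only [hlam']
        omega
      · rw [if_neg (by omega)] at hs
        rcases Nat.lt_or_ge (i+1) sc with h3 | h3
        · rw [if_pos h3] at hs
          have hq2 : q (i+1) = 2 := hq_eq2 _ (by omega) (by omega)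
          have hL1 : Lfun (i+1) = q (i+1) := by simp only [hLfun]; rw [if_pos h3]
          have := hlam1 i
          simp only [hlam'] at *
          omega
        · rw [if_neg (by omega)] at hs
          have hL1 : Lfun (i+1) = 1 := by simp only [hLfun]; rw [if_neg (by omega)]
          have h4 := hepsLf (i+1)
          have := hlam1 i
          simp only [hlam'] at *
          omega
  have hlam_mono : ∀ i j, i ≤ j → lam' j ≤ lam' i := by
    intro i j hij
    induction j, hij using Nat.le_induction with
    | base => exact le_refl _
    | succ j hij ih => exact le_trans (hlam_adj j) ih
  -- sums
  have hsum_eps : ∑ i ∈ Finset.range l, eps' i = e := by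
    simp only [heps']
    exact epsf_sum e (Δ 2) sc l hb_le_sc f5 he_le
  have hsplit : ∑ i ∈ Finset.range sc, q i + 2*c + (Δ 0 - Δ 1) = n := by
    have hsc_le : sc ≤ Δ 1 := by omega
    have h1 : ∑ i ∈ Finset.Ico sc (Δ 1), q i = ∑ _i ∈ Finset.Ico sc (Δ 1), 2 :=
      Finset.sum_congr rfl fun i hi => by
        rw [Finset.mem_Ico] at hi
        exact hq_eq2 i (by omega) hi.2
    have h2 : ∑ i ∈ Finset.Ico (Δ 1) (Δ 0), q i = ∑ _i ∈ Finset.Ico (Δ 1) (Δ 0), 1 :=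
      Finset.sum_congr rfl fun i hi => by
        rw [Finset.mem_Ico] at hi
        exact hq_eq1 i hi.1 hi.2
    rw [Finset.sum_const, Nat.card_Ico, smul_eq_mul] at h1
    rw [Finset.sum_const, Nat.card_Ico, smul_eq_mul] at h2
    have h3 := Finset.sum_Ico_consecutive q (Nat.zero_le sc) hsc_le
    have h4 := Finset.sum_Ico_consecutive q (Nat.zero_le (Δ 1)) hsN
    simp only [← Finset.range_eq_Ico] at h3 h4
    rw [← h4, ← h3, h1, h2] at hsum_q
    omega
  have hsum_L : ∑ i ∈ Finset.range l, Lfun i + 2*c + d = n := by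
    have h1 : ∑ i ∈ Finset.Ico 0 sc, Lfun i = ∑ i ∈ Finset.Ico 0 sc, q i :=
      Finset.sum_congr rfl fun i hi => by
        rw [Finset.mem_Ico] at hi
        simp only [hLfun]
        rw [if_pos hi.2]
    have h2 : ∑ i ∈ Finset.Ico sc l, Lfun i = ∑ _i ∈ Finset.Ico sc l, 1 :=
      Finset.sum_congr rfl fun i hi => by
        rw [Finset.mem_Ico] at hi
        simp only [hLfun]
        rw [if_neg (by omega)]
    rw [Finset.sum_const, Nat.card_Ico, smul_eq_mul] at h2
    have h3 := Finset.sum_Ico_consecutive Lfun (Nat.zero_le sc) f5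
    simp only [← Finset.range_eq_Ico] at h3
    simp only [← Finset.range_eq_Ico] at h1
    omega
  -- the witnesses
  refine ⟨l, fun i => lam' i.val, fun i => eps' i.val, c, d, ?_, ?_, ?_, ?_, ?_, ?_, ?_, ?_, ?_⟩
  · exact fun i => hlam1 i.val
  · exact fun i j hij => hlam_mono i.val j.val hij
  · rw [Fin.sum_univ_eq_sum_range lam' l]
    have hadd : ∑ i ∈ Finset.range l, (lam' i + eps' i) =
        ∑ i ∈ Finset.range l, lam' i + ∑ i ∈ Finset.range l, eps' i :=
      Finset.sum_add_distrib
    have heq : ∑ i ∈ Finset.range l, (lam' i + eps' i) = ∑ i ∈ Finset.range l, Lfun i :=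
      Finset.sum_congr rfl fun i _ => hsum_le i
    omega
  · exact fun i => heps2 i.val
  · rw [Fin.sum_univ_eq_sum_range eps' l, hsum_eps]
    omega
  · rw [Fin.sum_univ_eq_sum_range (fun i => lam' i + eps' i) l]
    have heq : ∑ i ∈ Finset.range l, (lam' i + eps' i) = ∑ i ∈ Finset.range l, Lfun i :=
      Finset.sum_congr rfl fun i _ => hsum_le i
    omega
  · rw [Multiset.sum_add, Multiset.sum_add, Multiset.sum_replicate, Multiset.sum_replicate]
    have hms : (Finset.univ.val.map fun i : Fin l => lam' i.val + eps' i.val).sum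
        = ∑ i : Fin l, (lam' i.val + eps' i.val) := rfl
    rw [hms, Fin.sum_univ_eq_sum_range (fun i => lam' i + eps' i) l]
    have heq : ∑ i ∈ Finset.range l, (lam' i + eps' i) = ∑ i ∈ Finset.range l, Lfun i :=
      Finset.sum_congr rfl fun i _ => hsum_le i
    simp only [smul_eq_mul]
    omega
  · intro x hx
    simp only [Multiset.mem_add, Multiset.mem_map, Finset.mem_val, Finset.mem_univ,
      true_and] at hx
    rcases hx with (⟨i, hi⟩ | hx) | hx
    · have := hlam1 i.val; omega
    · rw [Multiset.eq_of_mem_replicate hx]; omega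
    · rw [Multiset.eq_of_mem_replicate hx]; omega
  · intro j
    have hcount : ∀ (p : ℕ → Prop) (hp : DecidablePred p),
        ((Finset.univ.val.map fun i : Fin l => lam' i.val + eps' i.val).filter p).card
        = ∑ i ∈ Finset.range l, if p (Lfun i) then 1 else 0 := by
      intro p hp
      have hfun : (fun i : Fin l => lam' i.val + eps' i.val) = fun i : Fin l => Lfun i.val :=
        funext fun i => hsum_le i.val
      rw [hfun, ← Multiset.countP_eq_card_filter, Multiset.countP_map,
        ← Finset.filter_val, ← Finset.card_def, Finset.card_filter]
      exact Fin.sum_univ_eq_sum_range (fun i => if p (Lfun i) then 1 else 0) l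
    rw [Multiset.filter_add, Multiset.filter_add, Multiset.card_add, Multiset.card_add,
      hcount _ inferInstance, filter_replicate_card, filter_replicate_card]
    match j with
    | 0 =>
      have hone : ∑ i ∈ Finset.range l, (if (0:ℕ) + 1 ≤ Lfun i then 1 else 0)
          = ∑ _i ∈ Finset.range l, 1 :=
        Finset.sum_congr rfl fun i hi => by
          have h1 : 1 ≤ Lfun i := by have := hepsLf i; omega
          rw [if_pos (by omega : (0:ℕ) + 1 ≤ Lfun i)]
      rw [hone, Finset.sum_const, Finset.card_range, smul_eq_mul,
        if_pos (by omega : (0:ℕ) + 1 ≤ 2), if_pos (by omega : (0:ℕ) + 1 ≤ 1)]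
      have er : r (0+1) = r 1 := rfl
      rw [er]
      omega
    | 1 =>
      have hone : ∑ i ∈ Finset.range l, (if (1:ℕ) + 1 ≤ Lfun i then 1 else 0)
          = ∑ i ∈ Finset.range l, (if i < sc then 1 else 0) :=
        Finset.sum_congr rfl fun i hi => by
          rcases Nat.lt_or_ge i sc with h1 | h1
          · have hL : Lfun i = q i := by simp only [hLfun]; rw [if_pos h1]
            have h2 : 2 ≤ q i := (key i 1).2 (by omega)
            rw [hL, if_pos (by omega), if_pos h1]
          · have hL : Lfun i = 1 := by simp only [hLfun]; rw [if_neg (by omega)]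
            rw [hL, if_neg (by omega), if_neg (by omega)]
      rw [hone, sum_ite_lt l sc, if_pos (by omega : (1:ℕ) + 1 ≤ 2),
        if_neg (by omega : ¬ ((1:ℕ) + 1 ≤ 1))]
      have hmin : min sc l = sc := by omega
      have er : r (1+1) = r 2 := rfl
      rw [er]
      omega
    | (j+2) =>
      have hone : ∑ i ∈ Finset.range l, (if j + 2 + 1 ≤ Lfun i then 1 else 0)
          = ∑ i ∈ Finset.range l, (if i < Δ (j+2) then 1 else 0) :=
        Finset.sum_congr rfl fun i hi => by
          rcases Nat.lt_or_ge i sc with h1 | h1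
          · have hL : Lfun i = q i := by simp only [hLfun]; rw [if_pos h1]
            have h2 := key i (j+2)
            rw [hL]
            split_ifs <;> omega
          · have hL : Lfun i = 1 := by simp only [hLfun]; rw [if_neg (by omega)]
            have h2 : Δ (j+2) ≤ Δ 2 := hΔanti (by omega)
            rw [hL, if_neg (by omega), if_neg (by omega)]
      rw [hone, sum_ite_lt l (Δ (j+2)), if_neg (by omega : ¬ (j + 2 + 1 ≤ 2)),
        if_neg (by omega : ¬ (j + 2 + 1 ≤ 1))]
      have h2 : Δ (j+2) ≤ Δ 2 := hΔanti (by omega)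
      have h3 : Δ (j+2) = r (j+2) - r (j+2+1) := by simp only [hΔ]
      have h4 := hmono (j+2)
      have h5 : min (Δ (j+2)) l = Δ (j+2) := by omega
      omega

open Module in
private lemma rn {K V : Type*} [Field K] [AddCommGroup V] [Module K V] [FiniteDimensional K V]
    (f : V →ₗ[K] V) (p : Submodule K V) :
    finrank K (p.map f) + finrank K (LinearMap.ker f ⊓ p : Submodule K V) = finrank K p := by
  have h := LinearMap.finrank_range_add_finrank_ker (f.comp p.subtype)
  rw [LinearMap.range_comp, Submodule.range_subtype, LinearMap.ker_comp] at h
  have e : (Submodule.comap p.subtype (LinearMap.ker f)) ≃ₗ[K]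
      (LinearMap.ker f ⊓ p : Submodule K V) := by
    have h2 : Submodule.comap p.subtype (LinearMap.ker f)
        = Submodule.comap p.subtype (LinearMap.ker f ⊓ p) := by
      rw [Submodule.comap_inf, Submodule.comap_subtype_self, inf_top_eq]
    rw [h2]
    exact Submodule.comapSubtypeEquivOfLe inf_le_right
  rwa [e.finrank_eq] at h

open Module in
private lemma hpowlin {F : Type*} [Field F] {n : ℕ} (M : Matrix (Fin n) (Fin n) F) (i : ℕ) :
    (M^i).mulVecLin = M.mulVecLin ^ i := by
  induction i with
  | zero => rw [pow_zero, pow_zero, Matrix.mulVecLin_one]; rfl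
  | succ i ih => rw [pow_succ, pow_succ, Matrix.mulVecLin_mul, ih, Module.End.mul_eq_comp]

open Module in
private lemma hrankpow {F : Type*} [Field F] {n : ℕ} (M : Matrix (Fin n) (Fin n) F) (i : ℕ) :
    (M^i).rank = finrank F (LinearMap.range (M.mulVecLin ^ i)) := by
  rw [← hpowlin M i]; rfl

open Module in
private lemma keyD {F : Type*} [Field F] {n : ℕ} (M : Matrix (Fin n) (Fin n) F) (j : ℕ) :
    (M^(j+1)).rank + finrank F
      (LinearMap.ker M.mulVecLin ⊓ LinearMap.range (M.mulVecLin ^ j) : Submodule F (Fin n → F))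
      = (M^j).rank := by
  have h := rn M.mulVecLin (LinearMap.range (M.mulVecLin ^ j))
  have hmap : (LinearMap.range (M.mulVecLin ^ j)).map M.mulVecLin
      = LinearMap.range (M.mulVecLin ^ (j+1)) := by
    rw [pow_succ', Module.End.mul_eq_comp, LinearMap.range_comp]
  rw [hmap] at h
  rw [hrankpow M (j+1), hrankpow M j]
  exact h

open Module in
private lemma rangepow_mono {F : Type*} [Field F] {n : ℕ} (M : Matrix (Fin n) (Fin n) F)
    (j : ℕ) : LinearMap.range (M.mulVecLin ^ (j+1)) ≤ LinearMap.range (M.mulVecLin ^ j) := by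
  rw [pow_succ, Module.End.mul_eq_comp, LinearMap.range_comp]
  exact LinearMap.map_le_range

open Module in
private lemma cross {F : Type*} [Field F] {n : ℕ} (X Y : Matrix (Fin n) (Fin n) F)
    (hXY : X * Y = 0) (hYX : Y * X = 0) :
    (X^2).rank + finrank F
      (LinearMap.ker Y.mulVecLin ⊓ LinearMap.range (Y.mulVecLin ^ 1) : Submodule F (Fin n → F))
      + Y.rank ≤ n := by
  have hxy : X.mulVecLin ∘ₗ Y.mulVecLin = 0 := by
    rw [← Matrix.mulVecLin_mul, hXY, Matrix.mulVecLin_zero]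
  have hyx : Y.mulVecLin ∘ₗ X.mulVecLin = 0 := by
    rw [← Matrix.mulVecLin_mul, hYX, Matrix.mulVecLin_zero]
  have hry : LinearMap.range Y.mulVecLin ≤ LinearMap.ker X.mulVecLin :=
    LinearMap.range_le_ker_iff.mpr hxy
  have hrx : LinearMap.range X.mulVecLin ≤ LinearMap.ker Y.mulVecLin :=
    LinearMap.range_le_ker_iff.mpr hyx
  have h1 : (X^2).rank ≤ finrank F ((LinearMap.ker Y.mulVecLin).map X.mulVecLin) := by
    rw [hrankpow X 2]
    apply Submodule.finrank_mono
    have h2 : LinearMap.range (X.mulVecLin ^ 2)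
        = (LinearMap.range X.mulVecLin).map X.mulVecLin := by
      rw [pow_two, Module.End.mul_eq_comp, LinearMap.range_comp]
    rw [h2]
    exact Submodule.map_mono hrx
  have h2 := rn X.mulVecLin (LinearMap.ker Y.mulVecLin)
  have h3 : finrank F
        (LinearMap.ker Y.mulVecLin ⊓ LinearMap.range (Y.mulVecLin ^ 1) : Submodule F (Fin n → F))
      ≤ finrank F
        (LinearMap.ker X.mulVecLin ⊓ LinearMap.ker Y.mulVecLin : Submodule F (Fin n → F)) := by
    apply Submodule.finrank_mono
    rw [pow_one]
    exact le_inf (le_trans inf_le_right hry) inf_le_left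
  have h4 : Y.rank + finrank F (LinearMap.ker Y.mulVecLin) = n := by
    have h5 := LinearMap.finrank_range_add_finrank_ker Y.mulVecLin
    rw [Module.finrank_pi, Fintype.card_fin] at h5
    exact h5
  omega


/-- Necessity direction of the classification: if `B` has Jordan type
`(μ₁,…,μ_k,1^m)` with all `μ_i ≥ 2` and `A` is nilpotent with `AB = BA = 0`, then
the Jordan type of `A` is (the decreasing rearrangement of)
`(λ₁+ε₁,…,λ_l+ε_l, 2^c, 1^d)` for some partition `(λ₁,…,λ_l)` of `m`, some
`ε_i ∈ {0,1,2}` with `2c ≤ 2k − Σεᵢ`, and `2c + d + Σ(λᵢ+εᵢ) = n`. -/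
theorem stmt9 {F : Type*} [Field F] [IsAlgClosed F] {n k m : ℕ}
    (A B : Matrix (Fin n) (Fin n) F)
    (hA : IsNilpotent A) (hB : IsNilpotent B)
    (hAB : A * B = 0) (hBA : B * A = 0)
    (M : Multiset ℕ) (hM2 : ∀ x ∈ M, 2 ≤ x) (hMk : M.card = k)
    (hBtype : HasJordanType B (M + Multiset.replicate m 1)) :
    ∃ (l : ℕ) (lam eps : Fin l → ℕ) (c d : ℕ),
      (∀ i, 0 < lam i) ∧ (∀ i j, i ≤ j → lam j ≤ lam i) ∧ (∑ i, lam i = m) ∧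
      (∀ i, eps i ≤ 2) ∧ (∑ i, eps i) + 2 * c ≤ 2 * k ∧
      2 * c + d + (∑ i, (lam i + eps i)) = n ∧
      HasJordanType A
        ((Finset.univ.val.map fun i => lam i + eps i) +
          Multiset.replicate c 2 + Multiset.replicate d 1) := by
  classical
  obtain ⟨T, hTpow⟩ := hA
  obtain ⟨hBsum, hBpos, hBcnt⟩ := hBtype
  -- facts about B from its Jordan type
  have hB1 : k + m + B.rank = n := by
    have h := hBcnt 0
    have hfil : (M + Multiset.replicate m 1).filter (fun x => 0 + 1 ≤ x)
        = M + Multiset.replicate m 1 := by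
      rw [Multiset.filter_eq_self]
      intro x hx
      rcases Multiset.mem_add.mp hx with h1 | h1
      · have := hM2 x h1; omega
      · have := Multiset.eq_of_mem_replicate h1; omega
    rw [hfil, Multiset.card_add, Multiset.card_replicate, hMk] at h
    have h0 : (B^0).rank = n := by
      rw [pow_zero, Matrix.rank_one, Fintype.card_fin]
    have h1 : (B^(0+1)).rank = B.rank := by rw [zero_add, pow_one]
    rw [h0, h1] at h
    exact h
  have hB2 : k + (B^2).rank = B.rank := by
    have h := hBcnt 1
    have hfil : (M + Multiset.replicate m 1).filter (fun x => 1 + 1 ≤ x) = M := by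
      rw [Multiset.filter_add]
      have h1 : M.filter (fun x => 1 + 1 ≤ x) = M := by
        rw [Multiset.filter_eq_self]
        intro x hx; have := hM2 x hx; omega
      have h2 : (Multiset.replicate m 1).filter (fun x => 1 + 1 ≤ x) = 0 := by
        rw [Multiset.filter_eq_nil]
        intro x hx; rw [Multiset.eq_of_mem_replicate hx]; omega
      rw [h1, h2, add_zero]
    rw [hfil, hMk] at h
    have h1 : (B^(1+1)).rank = (B^2).rank := by norm_num
    have h2 : (B^1).rank = B.rank := by rw [pow_one]
    rw [h1, h2] at h
    exact h
  have hkm : 2*k + m ≤ n := by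
    rw [Multiset.sum_add, Multiset.sum_replicate, smul_eq_mul, mul_one] at hBsum
    have hge : M.card • 2 ≤ M.sum := Multiset.card_nsmul_le_sum hM2
    rw [hMk, smul_eq_mul] at hge
    omega
  -- cross inequalities
  have c1 := cross A B hAB hBA
  have c2 := cross B A hBA hAB
  have kA1 : (A^2).rank + Module.finrank F
      (LinearMap.ker A.mulVecLin ⊓ LinearMap.range (A.mulVecLin ^ 1) :
        Submodule F (Fin n → F)) = (A^1).rank := keyD A 1
  have kB1 : (B^2).rank + Module.finrank F
      (LinearMap.ker B.mulVecLin ⊓ LinearMap.range (B.mulVecLin ^ 1) :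
        Submodule F (Fin n → F)) = (B^1).rank := keyD B 1
  have hA1r : (A^1).rank = A.rank := by rw [pow_one]
  have hB1r : (B^1).rank = B.rank := by rw [pow_one]
  -- apply the combinatorial lemma
  have hcomb := comb (fun i => (A^i).rank) T n k m
    (by show (A^0).rank = n; rw [pow_zero, Matrix.rank_one, Fintype.card_fin])
    (by show (A^T).rank = 0; rw [hTpow, Matrix.rank_zero])
    (fun j => by
      show (A^(j+1)).rank ≤ (A^j).rank
      rw [pow_succ]; exact Matrix.rank_mul_le_left _ _)
    (fun j => by
      show (A^(j+1)).rank + (A^(j+1)).rank ≤ (A^j).rank + (A^(j+2)).rank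
      have k1 := keyD A j
      have k2 : (A^(j+2)).rank + Module.finrank F
          (LinearMap.ker A.mulVecLin ⊓ LinearMap.range (A.mulVecLin ^ (j+1)) :
            Submodule F (Fin n → F)) = (A^(j+1)).rank := keyD A (j+1)
      have hD : Module.finrank F
          (LinearMap.ker A.mulVecLin ⊓ LinearMap.range (A.mulVecLin ^ (j+1)) :
            Submodule F (Fin n → F)) ≤ Module.finrank F
          (LinearMap.ker A.mulVecLin ⊓ LinearMap.range (A.mulVecLin ^ j) :
            Submodule F (Fin n → F)) :=
        Submodule.finrank_mono (inf_le_inf_left _ (rangepow_mono A j))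
      omega)
    (by show (A^2).rank ≤ m; omega)
    (by show 2 * (A^1).rank ≤ 2*k + m + (A^2).rank; omega)
    hkm
  obtain ⟨l, lam, eps, c, d, g1, g2, g3, g4, g5, g6, g7, g8, g9⟩ := hcomb
  exact ⟨l, lam, eps, c, d, g1, g2, g3, g4, g5, g6, g7, g8, g9⟩
end

section
/- Let A be a block matrix [[A₁₁, A₁₂],[A₂₁, A₂₂]] with A₁₁² = 0, A₁₁A₁₂ = 0, A₂₁A₁₁ = 0, and A₂₁A₁₂ = 0. Then for every s ≥ 1, A^{s+1} = [[A₁₂A₂₂^{s-1}A₂₁, A₁₂A₂₂^s],[A₂₂^s A₂₁, A₂₂^{s+1}]]. -/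
/-- If `A = [[A₁₁, A₁₂],[A₂₁, A₂₂]]` with `A₁₁² = 0`, `A₁₁A₁₂ = 0`, `A₂₁A₁₁ = 0` and
`A₂₁A₁₂ = 0`, then for all `s ≥ 1`,
`A^(s+1) = [[A₁₂A₂₂^(s-1)A₂₁, A₁₂A₂₂^s],[A₂₂^s A₂₁, A₂₂^(s+1)]]`. -/
theorem stmt11 {F : Type*} [Field F] {p q : ℕ}
    (A11 : Matrix (Fin p) (Fin p) F) (A12 : Matrix (Fin p) (Fin q) F)
    (A21 : Matrix (Fin q) (Fin p) F) (A22 : Matrix (Fin q) (Fin q) F)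
    (h1 : A11 * A11 = 0) (h2 : A11 * A12 = 0)
    (h3 : A21 * A11 = 0) (h4 : A21 * A12 = 0) :
    ∀ s : ℕ, 1 ≤ s →
      (Matrix.fromBlocks A11 A12 A21 A22) ^ (s + 1) =
        Matrix.fromBlocks (A12 * A22 ^ (s - 1) * A21) (A12 * A22 ^ s)
          (A22 ^ s * A21) (A22 ^ (s + 1)) := by
  intro s hs
  induction s with
  | zero => omega
  | succ n ih =>
    rcases Nat.eq_zero_or_pos n with hn | hn
    · subst hn
      rw [pow_succ, pow_one, Matrix.fromBlocks_multiply]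
      simp [h1, h2, h3, h4, pow_succ]
    · have ihn := ih hn
      rw [pow_succ, ihn, Matrix.fromBlocks_multiply]
      have hn1 : n - 1 + 1 = n := Nat.succ_pred_eq_of_pos hn
      simp only [Matrix.mul_assoc, h3, h4, Matrix.mul_zero, zero_add, add_zero]
      simp only [← Matrix.mul_assoc]
      rw [Matrix.mul_assoc A12 (A22 ^ n) A22, ← pow_succ, ← pow_succ,
        Nat.add_sub_cancel]
end

section
/- Let B be nilpotent with all Jordan blocks of size ≥ 2 (k blocks total) and let A, A' both be nilpotent with AB = BA = 0 and A'B = BA' = 0. If rank(A) = rank(A'), then A and A' are similar (they have the same Jordan type (2^r, 1^{n−2r}) where r = rank A). -/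
set_option synthInstance.maxHeartbeats 1000000
set_option maxHeartbeats 1000000

open Module

noncomputable def canonMat (F : Type*) [Field F] (n r : ℕ) (h : 2 * r ≤ n) :
    Matrix (Fin n) (Fin n) F :=
  let σ : Fin n ≃ (Fin r ⊕ Fin r ⊕ Fin (n - 2 * r)) := Fintype.equivOfCardEq (by simp; omega)
  Matrix.of fun k l =>
    Sum.elim (fun i => if σ k = .inr (.inl i) then (1 : F) else 0) (fun _ => 0) (σ l)

lemma sq_zero_similar {F : Type*} [Field F] {n : ℕ} (A : Matrix (Fin n) (Fin n) F)
    (h2 : A * A = 0) {r : ℕ} (hr : A.rank = r) (h2r : 2 * r ≤ n) :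
    ∃ P : (Matrix (Fin n) (Fin n) F)ˣ,
      A = (P : Matrix (Fin n) (Fin n) F) * canonMat F n r h2r *
        ((P⁻¹ : (Matrix (Fin n) (Fin n) F)ˣ) : Matrix (Fin n) (Fin n) F) := by
  rcases Nat.eq_zero_or_pos n with hn | hn
  · subst hn
    exact ⟨1, Subsingleton.elim _ _⟩
  set f := A.mulVecLin with hf
  have hff : f.comp f = 0 := by
    rw [hf, ← Matrix.mulVecLin_mul, h2, Matrix.mulVecLin_zero]
  have hffx : ∀ x, f (f x) = 0 := fun x => congrFun (congrArg (fun g => g.toFun) hff) x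
  have hrk : LinearMap.range f ≤ LinearMap.ker f := by
    rintro y ⟨x, rfl⟩
    exact hffx x
  have hdim : finrank F (Fin n → F) = n := by simp
  have hrange : finrank F (LinearMap.range f) = r := hr
  have hkerd : finrank F (LinearMap.ker f) = n - r := by
    have := LinearMap.finrank_range_add_finrank_ker f
    rw [hdim, hrange] at this
    omega
  -- complement U of ker f
  obtain ⟨U, hU⟩ := Submodule.exists_isCompl (LinearMap.ker f)
  have hUd : finrank F U = r := by
    have := Submodule.finrank_add_eq_of_isCompl hU
    rw [hkerd, hdim] at this
    have hrn : r ≤ n := by omega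
    omega
  let bU : Basis (Fin r) F U := finBasisOfFinrankEq F U hUd
  -- complement W of range f inside ker f, obtained as C ⊓ ker f for C a complement of range f
  obtain ⟨C, hC⟩ := Submodule.exists_isCompl (LinearMap.range f)
  set W : Submodule F (Fin n → F) := C ⊓ LinearMap.ker f with hWdef
  have hWker : W ≤ LinearMap.ker f := inf_le_right
  have hsupW : LinearMap.range f ⊔ W = LinearMap.ker f := by
    have := sup_inf_assoc_of_le C hrk
    rw [hC.sup_eq_top, top_inf_eq] at this
    rw [hWdef, ← this]
  have hdisjW : Disjoint (LinearMap.range f) W := by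
    exact (hC.disjoint.mono_right inf_le_left)
  have hWd : finrank F W = n - 2 * r := by
    have h1 := Submodule.finrank_sup_add_finrank_inf_eq (LinearMap.range f) W
    rw [hsupW, hdisjW.eq_bot, hkerd, hrange, finrank_bot] at h1
    omega
  let bW : Basis (Fin (n - 2 * r)) F W := finBasisOfFinrankEq F W hWd
  -- the three families
  let v : Fin r → (Fin n → F) := fun i => (bU i : Fin n → F)
  let u : Fin (n - 2 * r) → (Fin n → F) := fun j => (bW j : Fin n → F)
  let e : (Fin r ⊕ Fin r ⊕ Fin (n - 2 * r)) → (Fin n → F) :=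
    Sum.elim v (Sum.elim (fun i => f (v i)) u)
  have hvU : ∀ i, v i ∈ U := fun i => (bU i).2
  have huW : ∀ j, u j ∈ W := fun j => (bW j).2
  have huK : ∀ j, u j ∈ LinearMap.ker f := fun j => hWker (huW j)
  -- linear independence of the three families
  have hliv : LinearIndependent F v :=
    bU.linearIndependent.map' U.subtype (Submodule.ker_subtype U)
  have hkerfU : LinearMap.ker (f ∘ₗ U.subtype) = ⊥ := by
    rw [LinearMap.ker_eq_bot']
    intro x hx
    have hx' : (x : Fin n → F) ∈ LinearMap.ker f ⊓ U := ⟨hx, x.2⟩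
    rw [hU.inf_eq_bot, Submodule.mem_bot] at hx'
    exact Subtype.ext hx'
  have hlifv : LinearIndependent F (fun i => f (v i)) :=
    bU.linearIndependent.map' (f ∘ₗ U.subtype) hkerfU
  have hliu : LinearIndependent F u :=
    bW.linearIndependent.map' W.subtype (Submodule.ker_subtype W)
  -- span computations
  have spv : Submodule.span F (Set.range v) = U := by
    have : Set.range v = U.subtype '' Set.range bU := by
      rw [← Set.range_comp]; rfl
    rw [this, ← Submodule.map_span, bU.span_eq, Submodule.map_top, Submodule.range_subtype]
  have spfv : Submodule.span F (Set.range fun i => f (v i)) = LinearMap.range f := by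
    have h1 : (Set.range fun i => f (v i)) = f '' Set.range v := by
      rw [← Set.range_comp]; rfl
    rw [h1, ← Submodule.map_span, spv]
    apply le_antisymm (LinearMap.map_le_range)
    rintro y ⟨x, rfl⟩
    obtain ⟨k, w, hk, hw, rfl⟩ := Submodule.codisjoint_iff_exists_add_eq.mp hU.codisjoint x
    rw [map_add, (LinearMap.mem_ker).mp hk, zero_add]
    exact ⟨w, hw, rfl⟩
  have spu : Submodule.span F (Set.range u) = W := by
    have h1 : Set.range u = W.subtype '' Set.range bW := by
      rw [← Set.range_comp]; rfl
    rw [h1, ← Submodule.map_span, bW.span_eq, Submodule.map_top, Submodule.range_subtype]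
  have hdisj_inner : Disjoint (Submodule.span F (Set.range fun i => f (v i)))
      (Submodule.span F (Set.range u)) := by
    rw [spfv, spu]
    exact hdisjW
  have hdisj_outer : Disjoint (Submodule.span F (Set.range v))
      (Submodule.span F (Set.range (Sum.elim (fun i => f (v i)) u))) := by
    rw [spv]
    apply Disjoint.mono_right _ hU.disjoint.symm
    rw [Set.Sum.elim_range, Submodule.span_union, spfv, spu, sup_le_iff]
    exact ⟨hrk, hWker⟩
  have hli : LinearIndependent F e :=
    hliv.sum_type (hlifv.sum_type hliu hdisj_inner) hdisj_outer
  have hnty : Nonempty (Fin r ⊕ Fin r ⊕ Fin (n - 2 * r)) := by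
    rcases Nat.eq_zero_or_pos r with h | h
    · exact ⟨.inr (.inr ⟨0, by omega⟩)⟩
    · exact ⟨.inl ⟨0, h⟩⟩
  have hcard : Fintype.card (Fin r ⊕ Fin r ⊕ Fin (n - 2 * r)) = finrank F (Fin n → F) := by
    rw [hdim]; simp; omega
  let bV := basisOfLinearIndependentOfCardEqFinrank hli hcard
  have hbV : ⇑bV = e := coe_basisOfLinearIndependentOfCardEqFinrank hli hcard
  -- canonical form
  let σ : Fin n ≃ (Fin r ⊕ Fin r ⊕ Fin (n - 2 * r)) := Fintype.equivOfCardEq (by simp; omega)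
  let bFin : Basis (Fin n) F (Fin n → F) := bV.reindex σ.symm
  have hbFin : ∀ l, bFin l = e (σ l) := by
    intro l
    rw [Module.Basis.reindex_apply, Equiv.symm_symm, hbV]
  have hfe1 : ∀ i, f (e (.inl i)) = e (.inr (.inl i)) := fun _ => rfl
  have hfe2 : ∀ m, f (e (.inr m)) = 0 := by
    rintro (i | j)
    · exact hffx _
    · exact huK j
  have hcanon : canonMat F n r h2r = Matrix.of fun k l =>
      Sum.elim (fun i => if σ k = .inr (.inl i) then (1 : F) else 0) (fun _ => 0) (σ l) := rfl
  have hC : LinearMap.toMatrix bFin bFin f = canonMat F n r h2r := by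
    ext k l
    rw [LinearMap.toMatrix_apply, hcanon]
    show bFin.repr (f (bFin l)) k =
      Sum.elim (fun i => if σ k = .inr (.inl i) then (1 : F) else 0) (fun _ => 0) (σ l)
    rcases hσl : σ l with i | m
    · have h1 : f (bFin l) = bFin (σ.symm (.inr (.inl i))) := by
        rw [hbFin, hσl, hfe1, hbFin, Equiv.apply_symm_apply]
      rw [h1, Basis.repr_self, Finsupp.single_apply, Sum.elim_inl]
      by_cases hk : σ k = .inr (.inl i)
      · rw [if_pos hk, if_pos]
        rw [Equiv.symm_apply_eq, hk]
      · rw [if_neg hk, if_neg]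
        rw [Equiv.symm_apply_eq]
        exact fun h => hk h.symm
    · rw [hbFin, hσl, hfe2, map_zero, Sum.elim_inr]
      rfl
  -- assemble
  letI := (Pi.basisFun F (Fin n)).invertibleToMatrix bFin
  refine ⟨unitOfInvertible ((Pi.basisFun F (Fin n)).toMatrix bFin), ?_⟩
  have key := basis_toMatrix_mul_linearMap_toMatrix_mul_basis_toMatrix
    (b := Pi.basisFun F (Fin n)) (b' := bFin) (c := Pi.basisFun F (Fin n)) (c' := bFin) (f := f)
  have hA2 : LinearMap.toMatrix (Pi.basisFun F (Fin n)) (Pi.basisFun F (Fin n)) f = A := by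
    rw [LinearMap.toMatrix_eq_toMatrix', hf, ← Matrix.toLin'_apply', LinearMap.toMatrix'_toLin']
  have hco1 : ((unitOfInvertible ((Pi.basisFun F (Fin n)).toMatrix bFin) :
      (Matrix (Fin n) (Fin n) F)ˣ) : Matrix (Fin n) (Fin n) F) =
      (Pi.basisFun F (Fin n)).toMatrix bFin := rfl
  have hco2 : ((((unitOfInvertible ((Pi.basisFun F (Fin n)).toMatrix bFin))⁻¹ :
      (Matrix (Fin n) (Fin n) F)ˣ)) : Matrix (Fin n) (Fin n) F) =
      bFin.toMatrix (Pi.basisFun F (Fin n)) := rfl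
  rw [hco1, hco2, ← hC, key, hA2]

lemma mulVecLin_range_le_ker_of_mul_eq_zero {F : Type*} [Field F] {n : ℕ}
    {M N : Matrix (Fin n) (Fin n) F} (h : M * N = 0) :
    LinearMap.range N.mulVecLin ≤ LinearMap.ker M.mulVecLin := by
  rintro y ⟨x, rfl⟩
  have h1 : (M * N).mulVecLin = 0 := by rw [h, Matrix.mulVecLin_zero]
  rw [Matrix.mulVecLin_mul] at h1
  exact LinearMap.congr_fun h1 x

lemma sq_eq_zero_of_annihilates {F : Type*} [Field F] {n : ℕ}
    {A B : Matrix (Fin n) (Fin n) F}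
    (hker : LinearMap.ker B.mulVecLin ≤ LinearMap.range B.mulVecLin)
    (hAB : A * B = 0) (hBA : B * A = 0) : A * A = 0 := by
  have h1 : LinearMap.range A.mulVecLin ≤ LinearMap.ker A.mulVecLin := by
    refine le_trans (mulVecLin_range_le_ker_of_mul_eq_zero hBA) (le_trans hker ?_)
    exact mulVecLin_range_le_ker_of_mul_eq_zero hAB
  have h2 : (A * A).mulVecLin = 0 := by
    rw [Matrix.mulVecLin_mul]
    refine LinearMap.ext fun x => ?_
    exact h1 ⟨x, rfl⟩
  calc A * A = LinearMap.toMatrix' (Matrix.toLin' (A * A)) := by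
        rw [LinearMap.toMatrix'_toLin']
    _ = 0 := by rw [Matrix.toLin'_apply', h2, map_zero]

lemma two_mul_rank_le_of_sq_eq_zero {F : Type*} [Field F] {n : ℕ}
    {A : Matrix (Fin n) (Fin n) F} (h2 : A * A = 0) : 2 * A.rank ≤ n := by
  have h1 : LinearMap.range A.mulVecLin ≤ LinearMap.ker A.mulVecLin :=
    mulVecLin_range_le_ker_of_mul_eq_zero h2
  have h3 := LinearMap.finrank_range_add_finrank_ker A.mulVecLin
  have h4 : finrank F (Fin n → F) = n := by simp
  have h5 : finrank F (LinearMap.range A.mulVecLin) ≤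
      finrank F (LinearMap.ker A.mulVecLin) := Submodule.finrank_mono h1
  have h6 : A.rank = finrank F (LinearMap.range A.mulVecLin) := rfl
  omega



lemma filter_replicate' (p : ℕ → Prop) [DecidablePred p] (k a : ℕ) :
    Multiset.filter p (Multiset.replicate k a) =
      if p a then Multiset.replicate k a else 0 := by
  split_ifs with h
  · exact Multiset.filter_eq_self.2 fun b hb => (Multiset.eq_of_mem_replicate hb) ▸ h
  · exact Multiset.filter_eq_nil.2 fun b hb hb' =>
      h ((Multiset.eq_of_mem_replicate hb) ▸ hb')

/-- If `B` is nilpotent with all Jordan blocks of size ≥ 2 (`ker B ⊆ im B`), and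
`A`, `A'` are nilpotent matrices annihilating `B` on both sides with
`rank A = rank A'`, then `A` and `A'` are similar; they have common Jordan type
`(2^r, 1^(n−2r))` where `r = rank A`. -/
theorem stmt13 {F : Type*} [Field F] [IsAlgClosed F] {n : ℕ}
    (B : Matrix (Fin n) (Fin n) F) (hB : IsNilpotent B)
    (hker : LinearMap.ker B.mulVecLin ≤ LinearMap.range B.mulVecLin)
    (A A' : Matrix (Fin n) (Fin n) F)
    (hA : IsNilpotent A) (hA' : IsNilpotent A')
    (hAB : A * B = 0) (hBA : B * A = 0)
    (hA'B : A' * B = 0) (hBA' : B * A' = 0)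
    (hrk : A.rank = A'.rank) :
    (∃ P : (Matrix (Fin n) (Fin n) F)ˣ, A' = (P : Matrix (Fin n) (Fin n) F) * A * ((P⁻¹ : (Matrix (Fin n) (Fin n) F)ˣ) : Matrix (Fin n) (Fin n) F)) ∧
    HasJordanType A
      (Multiset.replicate A.rank 2 + Multiset.replicate (n - 2 * A.rank) 1) := by
  have hA2 : A * A = 0 := sq_eq_zero_of_annihilates hker hAB hBA
  have hA'2 : A' * A' = 0 := sq_eq_zero_of_annihilates hker hA'B hBA'
  have h2r : 2 * A.rank ≤ n := two_mul_rank_le_of_sq_eq_zero hA2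
  constructor
  · obtain ⟨P, hP⟩ := sq_zero_similar A hA2 rfl h2r
    obtain ⟨Q, hQ⟩ := sq_zero_similar A' hA'2 hrk.symm h2r
    refine ⟨Q * P⁻¹, ?_⟩
    set C := canonMat F n A.rank h2r with hCdef
    have hPC : ((P⁻¹ : (Matrix (Fin n) (Fin n) F)ˣ) : Matrix (Fin n) (Fin n) F) * A *
        (P : Matrix (Fin n) (Fin n) F) = C := by
      rw [hP]
      rw [← Matrix.mul_assoc, ← Matrix.mul_assoc, Units.inv_mul, Matrix.one_mul,
        Matrix.mul_assoc, Units.inv_mul, Matrix.mul_one]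
    rw [hQ, ← hPC, mul_inv_rev, inv_inv, Units.val_mul, Units.val_mul]
    noncomm_ring
  · refine ⟨?_, ?_, ?_⟩
    · rw [Multiset.sum_add, Multiset.sum_replicate, Multiset.sum_replicate]
      simp only [smul_eq_mul]
      omega
    · intro x hx
      rcases Multiset.mem_add.1 hx with h | h
      · rw [Multiset.eq_of_mem_replicate h]; norm_num
      · rw [Multiset.eq_of_mem_replicate h]; norm_num
    · intro i
      have hpow : ∀ m : ℕ, A ^ (m + 2) = 0 := by
        intro m
        rw [pow_add, pow_two, hA2, Matrix.mul_zero]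
      have hr0 : (A ^ 0).rank = n := by
        rw [pow_zero, Matrix.rank_one, Fintype.card_fin]
      have hr1 : (A ^ 1).rank = A.rank := by rw [pow_one]
      match i with
      | 0 =>
        rw [hr0, hr1, Multiset.filter_add, filter_replicate', filter_replicate']
        rw [if_pos (by norm_num), if_pos (by norm_num)]
        rw [Multiset.card_add, Multiset.card_replicate, Multiset.card_replicate]
        omega
      | 1 =>
        rw [hr1, hpow 0, Matrix.rank_zero, Multiset.filter_add, filter_replicate',
          filter_replicate']
        rw [if_pos (by norm_num), if_neg (by norm_num)]
        rw [Multiset.card_add, Multiset.card_replicate, Multiset.card_zero]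
        omega
      | (m + 2) =>
        rw [hpow m, hpow (m + 1), Matrix.rank_zero, Multiset.filter_add, filter_replicate',
          filter_replicate']
        rw [if_neg (by omega), if_neg (by omega)]
        simp
end

section
/- Let B = J_{(μ,1^m)} with μ = (μ₁,...,μ_k), μ_k ≥ 2, m ≥ 1, and let A be nilpotent with AB = BA = 0, written in 2×2 block form with A₂₂ the m×m lower-right block (corresponding to the size-1 Jordan blocks of B). Then A₂₂ is nilpotent. -/
lemma mul_toBlocks₂₁ {F : Type*} [CommRing F] {α β : Type*} [Fintype α] [Fintype β]
    [DecidableEq α] [DecidableEq β]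
    (M N : Matrix (α ⊕ β) (α ⊕ β) F) :
    (M * N).toBlocks₂₁ = M.toBlocks₂₁ * N.toBlocks₁₁ + M.toBlocks₂₂ * N.toBlocks₂₁ := by
  ext p q
  simp [Matrix.toBlocks₂₁, Matrix.toBlocks₁₁, Matrix.toBlocks₂₂, Matrix.mul_apply,
    Fintype.sum_sum_type]

lemma mul_toBlocks₂₂ {F : Type*} [CommRing F] {α β : Type*} [Fintype α] [Fintype β]
    [DecidableEq α] [DecidableEq β]
    (M N : Matrix (α ⊕ β) (α ⊕ β) F) :
    (M * N).toBlocks₂₂ = M.toBlocks₂₁ * N.toBlocks₁₂ + M.toBlocks₂₂ * N.toBlocks₂₂ := by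
  ext p q
  simp [Matrix.toBlocks₂₁, Matrix.toBlocks₁₂, Matrix.toBlocks₂₂, Matrix.mul_apply,
    Fintype.sum_sum_type]

/-- Let `B = J_{(μ, 1^m)}` with all `μ_i ≥ 2` and `m ≥ 1`, and let `A` be nilpotent
with `AB = BA = 0`.  Then the bottom-right `m × m` block `A₂₂` of `A` (corresponding
to the size-1 Jordan blocks of `B`) is nilpotent. -/
theorem stmt17 {F : Type*} [Field F] [IsAlgClosed F] {k m : ℕ} (hm : 1 ≤ m)
    (μ : Fin k → ℕ) (hμ2 : ∀ i, 2 ≤ μ i) (hμmono : Antitone μ)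
    (A : Matrix (((i : Fin k) × Fin (μ i)) ⊕ Fin m) (((i : Fin k) × Fin (μ i)) ⊕ Fin m) F)
    (B : Matrix (((i : Fin k) × Fin (μ i)) ⊕ Fin m) (((i : Fin k) × Fin (μ i)) ⊕ Fin m) F)
    (hBdef : B = Matrix.fromBlocks
      (Matrix.blockDiagonal' fun i => jordanBlock F (μ i)) 0 0 0)
    (hA : IsNilpotent A) (hAB : A * B = 0) (hBA : B * A = 0) :
    IsNilpotent A.toBlocks₂₂ := by
  obtain ⟨N, hN⟩ := hA
  -- From A * B = 0 : the (2,1)-block of A vanishes except on last columns of Jordan blocks.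
  have h1 : ∀ (p : Fin m) (i : Fin k) (j : Fin (μ i)), (j : ℕ) + 1 < μ i →
      A (Sum.inr p) (Sum.inl ⟨i, j⟩) = 0 := by
    intro p i j hj
    have hEq := congrFun (congrFun hAB (Sum.inr p)) (Sum.inl ⟨i, ⟨(j : ℕ) + 1, hj⟩⟩)
    rw [Matrix.mul_apply, Matrix.zero_apply] at hEq
    have hsum : ∀ x, x ≠ (Sum.inl ⟨i, j⟩ : ((i : Fin k) × Fin (μ i)) ⊕ Fin m) →
        A (Sum.inr p) x * B x (Sum.inl ⟨i, ⟨(j : ℕ) + 1, hj⟩⟩) = 0 := by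
      rintro (⟨i', j'⟩ | q) hx
      · rw [hBdef]
        by_cases hii : i' = i
        · subst hii
          have hjj : j' ≠ j := fun h => hx (by rw [h])
          simp only [Matrix.fromBlocks_apply₁₁, Matrix.blockDiagonal'_apply_eq, jordanBlock,
            Matrix.of_apply]
          rw [if_neg, mul_zero]
          intro h
          exact hjj (Fin.ext (by omega))
        · rw [Matrix.fromBlocks_apply₁₁, Matrix.blockDiagonal'_apply_ne _ _ _ hii, mul_zero]
      · rw [hBdef, Matrix.fromBlocks_apply₂₁, Matrix.zero_apply, mul_zero]
    rw [Finset.sum_eq_single (Sum.inl ⟨i, j⟩) (fun x _ => hsum x) (by simp)] at hEq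
    rw [hBdef] at hEq
    simp only [Matrix.fromBlocks_apply₁₁, Matrix.blockDiagonal'_apply_eq, jordanBlock,
      Matrix.of_apply] at hEq
    simpa using hEq
  -- From B * A = 0 : rows of A indexed by non-first indices of Jordan blocks vanish.
  have h2 : ∀ (i : Fin k) (j : Fin (μ i)), 1 ≤ (j : ℕ) →
      ∀ y, A (Sum.inl ⟨i, j⟩) y = 0 := by
    intro i j hj y
    have hjm : (j : ℕ) - 1 < μ i := lt_trans (by omega) j.isLt
    have hEq := congrFun (congrFun hBA (Sum.inl ⟨i, ⟨(j : ℕ) - 1, hjm⟩⟩)) y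
    rw [Matrix.mul_apply, Matrix.zero_apply] at hEq
    have hsum : ∀ x, x ≠ (Sum.inl ⟨i, j⟩ : ((i : Fin k) × Fin (μ i)) ⊕ Fin m) →
        B (Sum.inl ⟨i, ⟨(j : ℕ) - 1, hjm⟩⟩) x * A x y = 0 := by
      rintro (⟨i', j'⟩ | q) hx
      · rw [hBdef]
        by_cases hii : i = i'
        · subst hii
          have hjj : j' ≠ j := fun h => hx (by rw [h])
          simp only [Matrix.fromBlocks_apply₁₁, Matrix.blockDiagonal'_apply_eq, jordanBlock,
            Matrix.of_apply]
          rw [if_neg, zero_mul]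
          intro h
          exact hjj (Fin.ext (by omega))
        · rw [Matrix.fromBlocks_apply₁₁, Matrix.blockDiagonal'_apply_ne _ _ _ hii, zero_mul]
      · rw [hBdef, Matrix.fromBlocks_apply₁₂, Matrix.zero_apply, zero_mul]
    rw [Finset.sum_eq_single (Sum.inl ⟨i, j⟩) (fun x _ => hsum x) (by simp)] at hEq
    rw [hBdef] at hEq
    simp only [Matrix.fromBlocks_apply₁₁, Matrix.blockDiagonal'_apply_eq, jordanBlock,
      Matrix.of_apply] at hEq
    rw [if_pos (by omega), one_mul] at hEq
    exact hEq.symm ▸ rfl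
  -- Hence A₂₁ * A₁₁ = 0 and A₂₁ * A₁₂ = 0.
  have hz : ∀ (p : Fin m) y, ∑ x : (i : Fin k) × Fin (μ i),
      A (Sum.inr p) (Sum.inl x) * A (Sum.inl x) y = 0 := by
    intro p y
    apply Finset.sum_eq_zero
    rintro ⟨i, j⟩ _
    by_cases hj : (j : ℕ) + 1 < μ i
    · rw [h1 p i j hj, zero_mul]
    · have : 1 ≤ (j : ℕ) := by have := hμ2 i; have := j.isLt; omega
      rw [h2 i j this, mul_zero]
  have hc1 : A.toBlocks₂₁ * A.toBlocks₁₁ = 0 := by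
    ext p q
    simpa [Matrix.toBlocks₂₁, Matrix.toBlocks₁₁, Matrix.mul_apply] using hz p (Sum.inl q)
  have hc2 : A.toBlocks₂₁ * A.toBlocks₁₂ = 0 := by
    ext p q
    simpa [Matrix.toBlocks₂₁, Matrix.toBlocks₁₂, Matrix.mul_apply] using hz p (Sum.inr q)
  -- Inductive computation of the blocks of A^(n+1).
  have key : ∀ n : ℕ, (A ^ (n + 1)).toBlocks₂₁ = A.toBlocks₂₂ ^ n * A.toBlocks₂₁ ∧
      (A ^ (n + 1)).toBlocks₂₂ = A.toBlocks₂₂ ^ (n + 1) := by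
    intro n
    induction n with
    | zero => simp
    | succ n ih =>
      obtain ⟨ih1, ih2⟩ := ih
      constructor
      · rw [pow_succ, mul_toBlocks₂₁, ih1, ih2, Matrix.mul_assoc, hc1, Matrix.mul_zero,
          zero_add]
      · rw [pow_succ, mul_toBlocks₂₂, ih1, ih2, Matrix.mul_assoc, hc2, Matrix.mul_zero,
          zero_add, ← pow_succ]
  refine ⟨N + 1, ?_⟩
  have hN1 : A ^ (N + 1) = 0 := by rw [pow_succ, hN, zero_mul]
  have := (key N).2
  rw [hN1] at this
  rw [← this]
  ext p q
  simp [Matrix.toBlocks₂₂]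
end
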